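/- arXiv:2009.04319 — 4 statements merged into one kernel-verified Lean document; each statement's English description precedes it below -/
import Mathlib

section
/- Let m>1 and N be real numbers, and let μ ≤ C_H := |(N-m)/m|^m. Then the set {β ∈ ℝ : G(β) ≥ μ} is a nonempty closed bounded interval [β⁻, β⁺] with β⁻ ≤ (m-N)/m ≤ β⁺, where G(β) = -β|β|^{m-2}(β(m-1)+N-m). Moreover if μ = C_H then β⁻ = β⁺ = (m-N)/m. -/
/-!
Away from `0`, where it need not be differentiable, `G` has derivative
`(m - 1) |β|^(m-2) (m - N - m β)`, so `G` increases strictly up to `c = (m - N)/m` and decreases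
strictly after it, with `G c = |c|^m = C_H`. Since `β |β|^(m-2) = ± |β|^(m-1)` with `m > 1`, `G` is
continuous and tends to `-∞` at `±∞`. The superlevel set `{G ≥ μ}` is therefore closed, bounded and
order-connected, and contains `c` as soon as `μ ≤ G c`; for `μ = G c` strict monotonicity leaves
only `c`.
-/

open Real Set Filter

lemma abs_mul_abs_rpow (x : ℝ) {p : ℝ} (hp : 1 + p ≠ 0) : |x * |x| ^ p| = |x| ^ (1 + p) := by
  rw [abs_mul, abs_of_nonneg (rpow_nonneg (abs_nonneg x) p), rpow_one_add' (abs_nonneg x) hp]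

lemma continuous_mul_abs_rpow {p : ℝ} (hp : -1 < p) : Continuous fun x : ℝ ↦ x * |x| ^ p := by
  refine continuous_iff_continuousAt.2 fun x ↦ ?_
  rcases eq_or_ne x 0 with rfl | hx
  · have hp' : 1 + p ≠ 0 := by linarith
    have hcont : Continuous fun x : ℝ ↦ |x| ^ (1 + p) :=
      continuous_abs.rpow_const fun _ ↦ Or.inr (by linarith)
    rw [ContinuousAt, zero_mul, tendsto_zero_iff_abs_tendsto_zero]
    simpa [Function.comp_def, abs_mul_abs_rpow _ hp', zero_rpow hp'] using hcont.tendsto 0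
  · exact continuousAt_id.mul (continuous_abs.continuousAt.rpow_const (Or.inl (abs_ne_zero.2 hx)))

lemma hasDerivAt_mul_abs_rpow (p : ℝ) {x : ℝ} (hx : x ≠ 0) :
    HasDerivAt (fun x : ℝ ↦ x * |x| ^ p) ((p + 1) * |x| ^ p) x := by
  have hx' : |x| ≠ 0 := abs_ne_zero.2 hx
  have hsign : x * SignType.sign x * |x| ^ (p - 1) = |x| ^ p := by
    rw [self_mul_sign, rpow_sub_one hx', mul_div_cancel₀ _ hx']
  refine ((hasDerivAt_id' x).mul ((hasDerivAt_abs hx).rpow_const (Or.inl hx'))).congr_deriv ?_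
  linear_combination p * hsign

lemma tendsto_mul_abs_rpow_atTop {p : ℝ} (hp : -1 < p) :
    Tendsto (fun x : ℝ ↦ x * |x| ^ p) atTop atTop := by
  refine (tendsto_rpow_atTop (by linarith : 0 < 1 + p)).congr' ?_
  filter_upwards [eventually_ge_atTop 0] with x hx
  rw [abs_of_nonneg hx, rpow_one_add' hx (by linarith)]

lemma tendsto_mul_abs_rpow_atBot {p : ℝ} (hp : -1 < p) :
    Tendsto (fun x : ℝ ↦ x * |x| ^ p) atBot atBot := by
  have := tendsto_neg_atTop_atBot.comp
    ((tendsto_mul_abs_rpow_atTop hp).comp tendsto_neg_atBot_atTop)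
  simpa [Function.comp_def] using this

lemma strictMonoOn_of_deriv_pos_of_ne {D : Set ℝ} (hD : Convex ℝ D) {f : ℝ → ℝ}
    (hf : ContinuousOn f D) {p : ℝ} (hf' : ∀ x ∈ interior D, x ≠ p → 0 < deriv f x) :
    StrictMonoOn f D := by
  intro x hx y hy hxy
  have key : ∀ a ∈ Icc x y, ∀ b ∈ Icc x y, a < b → p ∉ Ioo a b → f a < f b := by
    intro a ha b hb hab hp
    have hsub : Icc a b ⊆ D := (Icc_subset_Icc ha.1 hb.2).trans (hD.ordConnected.out hx hy)
    refine strictMonoOn_of_deriv_pos (convex_Icc a b) (hf.mono hsub) (fun z hz ↦ ?_)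
      (left_mem_Icc.2 hab.le) (right_mem_Icc.2 hab.le) hab
    exact hf' z (interior_mono hsub hz) fun h ↦ hp (h ▸ by rwa [interior_Icc] at hz)
  by_cases hp : p ∈ Ioo x y
  · calc f x < f p := key x ⟨le_rfl, hxy.le⟩ p (Ioo_subset_Icc_self hp) hp.1 fun h ↦ h.2.false
      _ < f y := key p (Ioo_subset_Icc_self hp) y ⟨hxy.le, le_rfl⟩ hp.2 fun h ↦ h.1.false
  · exact key x ⟨le_rfl, hxy.le⟩ y ⟨hxy.le, le_rfl⟩ hxy hp

section Superlevel

variable {f : ℝ → ℝ} {c μ : ℝ}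

lemma ordConnected_setOf_le_of_monotoneOn_of_antitoneOn (hmono : MonotoneOn f (Iic c))
    (hanti : AntitoneOn f (Ici c)) : {x | μ ≤ f x}.OrdConnected := by
  refine ⟨fun x hx y hy z hz ↦ ?_⟩
  rcases le_total z c with hzc | hcz
  · exact le_trans hx (hmono (hz.1.trans hzc) hzc hz.1)
  · exact le_trans hy (hanti hcz (hcz.trans hz.2) hz.2)

lemma exists_Icc_eq_setOf_le (hf : Continuous f) (hmono : MonotoneOn f (Iic c))
    (hanti : AntitoneOn f (Ici c)) (hbot : Tendsto f atBot atBot) (htop : Tendsto f atTop atBot)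
    (hμ : μ ≤ f c) : ∃ a b, a ≤ c ∧ c ≤ b ∧ {x | μ ≤ f x} = Icc a b := by
  set S := {x | μ ≤ f x}
  obtain ⟨s, hs⟩ := eventually_atBot.1 (hbot.eventually (eventually_lt_atBot μ))
  obtain ⟨t, ht⟩ := eventually_atTop.1 (htop.eventually (eventually_lt_atBot μ))
  have hsub : S ⊆ Icc s t := fun x hx ↦
    ⟨le_of_not_ge fun h ↦ (hs x h).not_ge hx, le_of_not_ge fun h ↦ (ht x h).not_ge hx⟩
  have hcS : c ∈ S := hμ
  have hcompact : IsCompact S :=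
    (isCompact_Icc (a := s) (b := t)).of_isClosed_subset (isClosed_Ici.preimage hf) hsub
  have hconn : IsConnected S :=
    ⟨⟨c, hcS⟩, (ordConnected_setOf_le_of_monotoneOn_of_antitoneOn hmono hanti).isPreconnected⟩
  exact ⟨sInf S, sSup S, csInf_le hcompact.bddBelow hcS, le_csSup hcompact.bddAbove hcS,
    eq_Icc_of_connected_compact hconn hcompact⟩

lemma setOf_le_eq_singleton_of_strictMonoOn_of_strictAntiOn (hmono : StrictMonoOn f (Iic c))
    (hanti : StrictAntiOn f (Ici c)) : {x | f c ≤ f x} = {c} := by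
  refine Subset.antisymm (fun x hx ↦ ?_) (singleton_subset_iff.2 (le_refl (f c)))
  rcases lt_trichotomy x c with h | rfl | h
  · exact absurd hx (hmono h.le self_mem_Iic h).not_ge
  · rfl
  · exact absurd hx (hanti self_mem_Ici h.le h).not_ge

end Superlevel

lemma abs_rpow_eq_sq_mul_abs_rpow_sub_two (x : ℝ) {p : ℝ} (hp : p ≠ 0) :
    |x| ^ p = x ^ 2 * |x| ^ (p - 2) := by
  rw [← sq_abs, ← rpow_two, ← rpow_add' (abs_nonneg x) (by simpa using hp), add_sub_cancel]

noncomputable def hardyG (m N β : ℝ) : ℝ := -(β * |β| ^ (m - 2)) * (β * (m - 1) + N - m)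

section HardyG

variable {m : ℝ} (N : ℝ)

lemma continuous_hardyG (hm : 1 < m) : Continuous (hardyG m N) :=
  (continuous_mul_abs_rpow (by linarith)).neg.mul (by fun_prop)

lemma hasDerivAt_hardyG {β : ℝ} (hβ : β ≠ 0) :
    HasDerivAt (hardyG m N) ((m - 1) * |β| ^ (m - 2) * (m - N - m * β)) β :=
  ((hasDerivAt_mul_abs_rpow (m - 2) hβ).neg.mul
    ((((hasDerivAt_id' β).mul_const (m - 1)).add_const N).sub_const m)).congr_deriv
    (by simp only [Pi.neg_apply]; ring)

lemma strictMonoOn_hardyG (hm : 1 < m) : StrictMonoOn (hardyG m N) (Iic ((m - N) / m)) := by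
  refine strictMonoOn_of_deriv_pos_of_ne (convex_Iic _) (continuous_hardyG N hm).continuousOn
    (p := 0) fun x hx hx0 ↦ ?_
  rw [interior_Iic, mem_Iio, lt_div_iff₀ (by linarith)] at hx
  rw [(hasDerivAt_hardyG N hx0).deriv]
  exact mul_pos (mul_pos (by linarith) (rpow_pos_of_pos (abs_pos.2 hx0) _)) (by linarith)

lemma strictAntiOn_hardyG (hm : 1 < m) : StrictAntiOn (hardyG m N) (Ici ((m - N) / m)) := by
  have : StrictMonoOn (fun x ↦ -hardyG m N x) (Ici ((m - N) / m)) := by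
    refine strictMonoOn_of_deriv_pos_of_ne (convex_Ici _)
      (continuous_hardyG N hm).neg.continuousOn (p := 0) fun x hx hx0 ↦ ?_
    rw [interior_Ici, mem_Ioi, div_lt_iff₀ (by linarith)] at hx
    rw [(hasDerivAt_hardyG N hx0).fun_neg.deriv, neg_pos]
    exact mul_neg_of_pos_of_neg (mul_pos (by linarith) (rpow_pos_of_pos (abs_pos.2 hx0) _))
      (by linarith)
  simpa using this.neg

lemma tendsto_hardyG_atTop (hm : 1 < m) : Tendsto (hardyG m N) atTop atBot :=
  (tendsto_neg_atTop_atBot.comp (tendsto_mul_abs_rpow_atTop (by linarith))).atBot_mul_atTop₀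
    (tendsto_atTop_add_const_right _ _
      (tendsto_atTop_add_const_right _ _ (tendsto_id.atTop_mul_const (by linarith))))

lemma tendsto_hardyG_atBot (hm : 1 < m) : Tendsto (hardyG m N) atBot atBot :=
  (tendsto_neg_atBot_atTop.comp (tendsto_mul_abs_rpow_atBot (by linarith))).atTop_mul_atBot₀
    (tendsto_atBot_add_const_right _ _
      (tendsto_atBot_add_const_right _ _ (tendsto_id.atBot_mul_const (by linarith))))

lemma hardyG_critical (hm : 1 < m) : hardyG m N ((m - N) / m) = |(N - m) / m| ^ m := by
  have hm0 : m ≠ 0 := by linarith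
  have hL : (m - N) / m * (m - 1) + N - m = -((m - N) / m) := by field_simp; ring
  rw [hardyG, hL, show (N - m) / m = -((m - N) / m) by ring, abs_neg,
    abs_rpow_eq_sq_mul_abs_rpow_sub_two _ hm0]
  ring

end HardyG

/-- For m>1, N real, μ ≤ C_H = |(N-m)/m|^m, the set {β : G(β) ≥ μ} is a closed
bounded interval [β⁻,β⁺] with β⁻ ≤ (m-N)/m ≤ β⁺; if μ = C_H then β⁻ = β⁺ = (m-N)/m. -/
theorem stmt_2 (m N μ : ℝ) (hm : 1 < m) (hμ : μ ≤ |(N - m) / m| ^ m)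
    (G : ℝ → ℝ) (hG : ∀ β : ℝ, G β = -β * |β| ^ (m - 2) * (β * (m - 1) + N - m)) :
    ∃ βm βp : ℝ, βm ≤ (m - N) / m ∧ (m - N) / m ≤ βp ∧
      {β : ℝ | μ ≤ G β} = Set.Icc βm βp ∧
      (μ = |(N - m) / m| ^ m → βm = (m - N) / m ∧ βp = (m - N) / m) := by
  obtain rfl : G = hardyG m N := funext fun β ↦ by rw [hG, hardyG]; ring
  rw [← hardyG_critical N hm] at hμ ⊢
  obtain ⟨βm, βp, hβm, hβp, hS⟩ := exists_Icc_eq_setOf_le (continuous_hardyG N hm)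
    (strictMonoOn_hardyG N hm).monotoneOn (strictAntiOn_hardyG N hm).antitoneOn
    (tendsto_hardyG_atBot N hm) (tendsto_hardyG_atTop N hm) hμ
  refine ⟨βm, βp, hβm, hβp, hS, fun hμc ↦ Icc_eq_singleton_iff.1 ?_⟩
  rw [← hS, hμc]
  exact setOf_le_eq_singleton_of_strictMonoOn_of_strictAntiOn (strictMonoOn_hardyG N hm)
    (strictAntiOn_hardyG N hm)
end

section
/- Let N ≥ 1, α ∈ (0,N), p > 0, γ < 0, τ ≥ 0, s > 1, c > 0 with α + pγ < 0 and p|γ| < N. Suppose 0 ≤ f(y) ≤ c|y|^γ log^τ(s|y|) for |y| ≥ 1. Then there exists C > 0 such that for all |x| ≥ 1: ∫_{|y|≥1} f(y)^p/|x-y|^{N-α} dy ≤ C |x|^{α+pγ} log^{pτ}(s|x|). -/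
/-!
Since `f ^ p ≤ c ^ p ‖y‖ ^ a log ^ b (s‖y‖)` with `a = pγ`, `b = pτ`, it suffices to bound the
potential of the weight `‖y‖ ^ a log ^ b (s‖y‖)`. Split `{‖y‖ ≥ 1}` by comparing `‖y‖` with
`X = ‖x‖`, and write `n` for the dimension.
* Far out (`‖y‖ ≥ 2X`) the kernel is `≲ ‖y‖ ^ (α - n)`, and `log ^ b (s‖y‖)` is at most a
  constant times `(‖y‖ / X) ^ δ log ^ b (sX)` for any `δ > 0`. Taking `δ` half the margin
  `-(α + a)` keeps `‖y‖ ^ (a + δ + α - n)` integrable at infinity; its integral over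
  `{‖y‖ ≥ 2X}` is `≍ X ^ (-δ)`, which with the factor `X ^ (-δ)` gives `X ^ (α + a)`.
* In the annulus `X/2 ≤ ‖y‖ ≤ 2X` the weight is `≲ X ^ a log ^ b (sX)`, and the kernel integrates
  over the ball of radius `4X` around `x` to `≍ X ^ α`.
* Near the origin (`‖y‖ < X/2`) the kernel is `≲ X ^ (α - n)`, and `‖y‖ ^ a` integrates over the
  ball of radius `X` to `≍ X ^ (n + a)`.
Each power integral comes from the one over the unit ball or its exterior by scaling; these are
finite because `a` and `α - n` exceed `-n` while `a + δ + α - n < -n`.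
-/

open MeasureTheory Metric Module Set
open scoped ENNReal

theorem setLIntegral_ofReal_le_ofReal_mul {X : Type*} [MeasurableSpace X] {μ : Measure X}
    {S T : Set X} {F G : X → ℝ} {M : ℝ} (hM : 0 ≤ M) (hG : Measurable G) (hST : S ⊆ T)
    (hFG : ∀ y ∈ S, F y ≤ M * G y) :
    ∫⁻ y in S, ENNReal.ofReal (F y) ∂μ ≤ ENNReal.ofReal M * ∫⁻ y in T, ENNReal.ofReal (G y) ∂μ :=
  calc ∫⁻ y in S, ENNReal.ofReal (F y) ∂μ
      ≤ ∫⁻ y in S, ENNReal.ofReal M * ENNReal.ofReal (G y) ∂μ :=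
        setLIntegral_mono (by fun_prop) fun y hy ↦ by
          rw [← ENNReal.ofReal_mul hM]; exact ENNReal.ofReal_le_ofReal (hFG y hy)
    _ = ENNReal.ofReal M * ∫⁻ y in S, ENNReal.ofReal (G y) ∂μ :=
        lintegral_const_mul' _ _ ENNReal.ofReal_ne_top
    _ ≤ ENNReal.ofReal M * ∫⁻ y in T, ENNReal.ofReal (G y) ∂μ := by
        gcongr ENNReal.ofReal M * ?_
        exact lintegral_mono_set hST

theorem setLIntegral_ball_norm_sub_rpow {G : Type*} [NormedAddCommGroup G] [MeasurableSpace G]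
    [BorelSpace G] (μ : Measure G) [μ.IsAddRightInvariant] (x : G) (R t : ℝ) :
    ∫⁻ y in ball x R, ENNReal.ofReal (‖x - y‖ ^ t) ∂μ =
      ∫⁻ z in ball 0 R, ENNReal.ofReal (‖z‖ ^ t) ∂μ := by
  rw [← (measurePreserving_add_right μ x).setLIntegral_comp_preimage measurableSet_ball
    (by fun_prop)]
  congr 2
  · ext z; simp
  · ext z; simp

section Scaling

variable {E : Type*} [NormedAddCommGroup E] [NormedSpace ℝ E] [FiniteDimensional ℝ E]
  [MeasurableSpace E] [BorelSpace E] (μ : Measure E) [μ.IsAddHaarMeasure]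

theorem setLIntegral_norm_rpow_eq_mul_preimage_smul {R : ℝ} (hR : 0 < R) (t : ℝ) {S : Set E}
    (hS : MeasurableSet S) :
    ∫⁻ y in S, ENNReal.ofReal (‖y‖ ^ t) ∂μ =
      ENNReal.ofReal (R ^ (finrank ℝ E + t)) *
        ∫⁻ z in (R • ·) ⁻¹' S, ENNReal.ofReal (‖z‖ ^ t) ∂μ := by
  have hmap : μ = ENNReal.ofReal (R ^ (finrank ℝ E : ℝ)) • μ.map (R • ·) := by
    rw [Measure.map_addHaar_smul μ hR.ne', smul_smul, ← ENNReal.ofReal_mul (by positivity),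
      abs_of_pos (by positivity), Real.rpow_natCast, mul_inv_cancel₀ (by positivity),
      ENNReal.ofReal_one, one_smul]
  have hscale (z : E) : ENNReal.ofReal (‖R • z‖ ^ t) =
      ENNReal.ofReal (R ^ t) * ENNReal.ofReal (‖z‖ ^ t) := by
    rw [norm_smul, Real.norm_of_nonneg hR.le, Real.mul_rpow hR.le (norm_nonneg z),
      ENNReal.ofReal_mul (by positivity)]
  conv_lhs => rw [hmap]
  rw [Measure.restrict_smul, lintegral_smul_measure,
    setLIntegral_map hS (by fun_prop) (measurable_const_smul R)]
  simp_rw [hscale]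
  rw [lintegral_const_mul' _ _ ENNReal.ofReal_ne_top, Real.rpow_add hR,
    ENNReal.ofReal_mul (by positivity), smul_eq_mul, mul_assoc]

theorem exists_setLIntegral_ball_norm_rpow_eq (hE : 1 ≤ finrank ℝ E) {t : ℝ}
    (ht : -(finrank ℝ E : ℝ) < t) :
    ∃ K, 0 ≤ K ∧ ∀ R, 0 < R →
      ∫⁻ z in ball 0 R, ENNReal.ofReal (‖z‖ ^ t) ∂μ =
        ENNReal.ofReal (R ^ (finrank ℝ E + t) * K) := by
  have hfin : ∫⁻ z in ball 0 1, ENNReal.ofReal (‖z‖ ^ t) ∂μ < ∞ :=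
    IntegrableOn.setLIntegral_lt_top <| integrableOn_ball_of_norm_le_rpow hE (C := 1) (α := -t)
      (by linarith)
      (ae_of_all _ fun z ↦ by simp [abs_of_nonneg (Real.rpow_nonneg (norm_nonneg z) t)])
      (measurable_norm.pow_const t).aestronglyMeasurable
  refine ⟨(∫⁻ z in ball 0 1, ENNReal.ofReal (‖z‖ ^ t) ∂μ).toReal, ENNReal.toReal_nonneg,
    fun R hR ↦ ?_⟩
  rw [setLIntegral_norm_rpow_eq_mul_preimage_smul μ hR t measurableSet_ball,
    ENNReal.ofReal_mul (by positivity), ENNReal.ofReal_toReal hfin.ne]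
  congr 3
  ext z
  simp [norm_smul, abs_of_pos hR, hR]

theorem exists_setLIntegral_outside_ball_norm_rpow_eq {t : ℝ} (ht : t < -(finrank ℝ E : ℝ)) :
    ∃ K, 0 ≤ K ∧ ∀ R, 0 < R →
      ∫⁻ z in {z | R ≤ ‖z‖}, ENNReal.ofReal (‖z‖ ^ t) ∂μ =
        ENNReal.ofReal (R ^ (finrank ℝ E + t) * K) := by
  have hbound : ∀ z ∈ {z : E | 1 ≤ ‖z‖}, ‖z‖ ^ t ≤ 2 ^ (-t) * (1 + ‖z‖) ^ t := by
    intro z (hz : 1 ≤ ‖z‖)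
    calc ‖z‖ ^ t = 2 ^ (-t) * (2 * ‖z‖) ^ t := by
          rw [Real.mul_rpow zero_le_two (norm_nonneg z), ← mul_assoc, ← Real.rpow_add two_pos,
            neg_add_cancel, Real.rpow_zero, one_mul]
      _ ≤ 2 ^ (-t) * (1 + ‖z‖) ^ t := by
          gcongr ?_ * ?_
          exact Real.rpow_le_rpow_of_nonpos (by positivity) (by linarith) (by linarith)
  have hfin : ∫⁻ z in {z | 1 ≤ ‖z‖}, ENNReal.ofReal (‖z‖ ^ t) ∂μ < ∞ := by
    refine (setLIntegral_ofReal_le_ofReal_mul (by positivity) (by fun_prop) (subset_univ _)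
      hbound).trans_lt (ENNReal.mul_lt_top ENNReal.ofReal_lt_top ?_)
    rw [Measure.restrict_univ, ← neg_neg t]
    exact finite_integral_one_add_norm (by linarith)
  refine ⟨(∫⁻ z in {z | 1 ≤ ‖z‖}, ENNReal.ofReal (‖z‖ ^ t) ∂μ).toReal, ENNReal.toReal_nonneg,
    fun R hR ↦ ?_⟩
  rw [setLIntegral_norm_rpow_eq_mul_preimage_smul μ hR t
    (measurableSet_le measurable_const measurable_norm), ENNReal.ofReal_mul (by positivity),
    ENNReal.ofReal_toReal hfin.ne]
  congr 3
  ext z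
  simp [norm_smul, abs_of_pos hR, hR]

end Scaling

namespace Real

theorem rpow_le_two_rpow_mul_rpow {d ρ e : ℝ} (hρ : 0 < ρ) (hd : ρ / 2 ≤ d) (he : e ≤ 0) :
    d ^ e ≤ 2 ^ (-e) * ρ ^ e :=
  calc d ^ e ≤ (ρ / 2) ^ e := rpow_le_rpow_of_nonpos (by positivity) hd he
    _ = 2 ^ (-e) * ρ ^ e := by
        rw [div_rpow hρ.le zero_le_two, rpow_neg zero_le_two, div_eq_inv_mul]

theorem log_mul_mul_le {s R u ε : ℝ} (hs : 1 < s) (hR : 1 ≤ R) (hu : 1 ≤ u) (hε : 0 < ε) :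
    log (s * (u * R)) ≤ (1 + 1 / (ε * log s)) * u ^ ε * log (s * R) := by
  have hls : 0 < log s := log_pos hs
  have hL : log s ≤ log (s * R) := log_le_log (by linarith) (by nlinarith)
  have huε : 1 ≤ u ^ ε := one_le_rpow hu hε.le
  have hlogu : log u ≤ u ^ ε / (ε * log s) * log (s * R) :=
    calc log u ≤ u ^ ε / ε := log_le_rpow_div (by linarith) hε
      _ = u ^ ε / (ε * log s) * log s := by field_simp
      _ ≤ u ^ ε / (ε * log s) * log (s * R) := by gcongr
  calc log (s * (u * R)) = log (s * R) + log u := by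
        rw [mul_left_comm, log_mul (by positivity) (by positivity), add_comm]
    _ ≤ u ^ ε * log (s * R) + u ^ ε / (ε * log s) * log (s * R) := by
        gcongr
        exact le_mul_of_one_le_left (by linarith) huε
    _ = (1 + 1 / (ε * log s)) * u ^ ε * log (s * R) := by ring

theorem exists_log_rpow_le {s b δ : ℝ} (hs : 1 < s) (hb : 0 ≤ b) (hδ : 0 < δ) :
    ∃ C, 0 ≤ C ∧ ∀ R r u : ℝ, 1 ≤ R → 1 ≤ r → 1 ≤ u → r ≤ u * R →
      log (s * r) ^ b ≤ C * u ^ δ * log (s * R) ^ b := by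
  set ε := δ / (b + 1)
  have hε : 0 < ε := by positivity
  have hεb : ε * b ≤ δ := by
    rw [div_mul_eq_mul_div, div_le_iff₀ (by linarith)]; nlinarith
  set K := 1 + 1 / (ε * log s)
  have hK : 0 ≤ K := by have := log_pos hs; positivity
  refine ⟨K ^ b, by positivity, fun R r u hR hr hu hrR ↦ ?_⟩
  have hsR : 0 ≤ log (s * R) := log_nonneg (by nlinarith)
  have hlog : log (s * r) ≤ K * u ^ ε * log (s * R) :=
    (log_le_log (by positivity) (by gcongr)).trans (log_mul_mul_le hs hR hu hε)
  calc log (s * r) ^ b ≤ (K * u ^ ε * log (s * R)) ^ b := by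
        gcongr; exact log_nonneg (by nlinarith)
    _ = K ^ b * u ^ (ε * b) * log (s * R) ^ b := by
        rw [mul_rpow (by positivity) hsR, mul_rpow hK (by positivity), ← rpow_mul (by linarith)]
    _ ≤ K ^ b * u ^ δ * log (s * R) ^ b := by gcongr

theorem rpow_le_mul_rpow_mul_rpow {v c r l γ τ p : ℝ} (hv : 0 ≤ v) (hc : 0 ≤ c) (hr : 0 ≤ r)
    (hl : 0 ≤ l) (hp : 0 ≤ p) (h : v ≤ c * r ^ γ * l ^ τ) :
    v ^ p ≤ c ^ p * r ^ (p * γ) * l ^ (p * τ) :=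
  calc v ^ p ≤ (c * r ^ γ * l ^ τ) ^ p := by gcongr
    _ = c ^ p * r ^ (p * γ) * l ^ (p * τ) := by
        rw [mul_rpow (by positivity) (by positivity), mul_rpow hc (by positivity), ← rpow_mul hr,
          ← rpow_mul hl, mul_comm γ, mul_comm τ]

end Real

section Riesz

variable {E : Type*} [NormedAddCommGroup E] [NormedSpace ℝ E] [FiniteDimensional ℝ E]
  [MeasurableSpace E] [BorelSpace E] (μ : Measure E) [μ.IsAddHaarMeasure] {α a b s : ℝ}

theorem exists_setLIntegral_riesz_far_le (hs : 1 < s) (hb : 0 ≤ b) (hαa : α + a < 0)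
    (hα : α ≤ finrank ℝ E) :
    ∃ C, 0 ≤ C ∧ ∀ x : E, 1 ≤ ‖x‖ →
      ∫⁻ y in {y | 2 * ‖x‖ ≤ ‖y‖},
          ENNReal.ofReal (‖y‖ ^ a * Real.log (s * ‖y‖) ^ b * ‖x - y‖ ^ (α - finrank ℝ E)) ∂μ ≤
        ENNReal.ofReal (C * ‖x‖ ^ (α + a) * Real.log (s * ‖x‖) ^ b) := by
  set n : ℝ := (finrank ℝ E : ℝ)
  set δ := -(α + a) / 2 with hδ_def
  have hδ : 0 < δ := by linarith
  obtain ⟨CL, hCL, hlog⟩ := Real.exists_log_rpow_le hs hb hδ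
  obtain ⟨K, hK, hint⟩ := exists_setLIntegral_outside_ball_norm_rpow_eq μ
    (t := a + δ + (α - n)) (by linarith)
  refine ⟨2 ^ (n - α) * CL * 2 ^ (-δ) * K, by positivity, fun x hx ↦ ?_⟩
  set X := ‖x‖
  have hX : 0 < X := by linarith
  have hLX : 0 ≤ Real.log (s * X) := Real.log_nonneg (by nlinarith)
  set M := 2 ^ (n - α) * CL * X ^ (-δ) * Real.log (s * X) ^ b with hM
  have hpoint : ∀ y ∈ {y : E | 2 * X ≤ ‖y‖},
      ‖y‖ ^ a * Real.log (s * ‖y‖) ^ b * ‖x - y‖ ^ (α - n) ≤ M * ‖y‖ ^ (a + δ + (α - n)) := by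
    intro y (hy : 2 * X ≤ ‖y‖)
    have hy0 : 0 < ‖y‖ := by linarith
    have hkernel : ‖x - y‖ ^ (α - n) ≤ 2 ^ (n - α) * ‖y‖ ^ (α - n) := by
      have := norm_sub_norm_le y x
      rw [norm_sub_rev] at this
      simpa using Real.rpow_le_two_rpow_mul_rpow hy0 (by linarith) (by linarith : α - n ≤ 0)
    have hlogy : Real.log (s * ‖y‖) ^ b ≤ CL * (‖y‖ / X) ^ δ * Real.log (s * X) ^ b :=
      hlog X ‖y‖ (‖y‖ / X) hx (by linarith) ((one_le_div hX).2 (by linarith))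
        (div_mul_cancel₀ _ hX.ne').ge
    calc ‖y‖ ^ a * Real.log (s * ‖y‖) ^ b * ‖x - y‖ ^ (α - n)
        ≤ ‖y‖ ^ a * (CL * (‖y‖ / X) ^ δ * Real.log (s * X) ^ b) *
            (2 ^ (n - α) * ‖y‖ ^ (α - n)) := by gcongr ?_ * ?_ * ?_
      _ = M * ‖y‖ ^ (a + δ + (α - n)) := by
          rw [hM, Real.div_rpow hy0.le hX.le, Real.rpow_add hy0, Real.rpow_add hy0,
            Real.rpow_neg hX.le]
          field_simp
  calc _ ≤ ENNReal.ofReal M *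
          ∫⁻ y in {y : E | 2 * X ≤ ‖y‖}, ENNReal.ofReal (‖y‖ ^ (a + δ + (α - n))) ∂μ :=
        setLIntegral_ofReal_le_ofReal_mul (by positivity) (by fun_prop) subset_rfl hpoint
    _ = ENNReal.ofReal (M * ((2 * X) ^ (n + (a + δ + (α - n))) * K)) := by
        rw [hint _ (by positivity), ← ENNReal.ofReal_mul (by positivity)]
    _ = ENNReal.ofReal (2 ^ (n - α) * CL * 2 ^ (-δ) * K * X ^ (α + a) * Real.log (s * X) ^ b) := by
        have hXδ : X ^ (α + a) = X ^ (-δ) * X ^ (-δ) := by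
          rw [← Real.rpow_add hX]; congr 1; linarith
        rw [show n + (a + δ + (α - n)) = -δ by linarith, Real.mul_rpow zero_le_two hX.le, hXδ, hM]
        congr 1
        ring

theorem exists_setLIntegral_riesz_annulus_le (hs : 1 < s) (hb : 0 ≤ b) (ha : a ≤ 0)
    (hα : 0 < α) (hE : 1 ≤ finrank ℝ E) :
    ∃ C, 0 ≤ C ∧ ∀ x : E, 1 ≤ ‖x‖ →
      ∫⁻ y in {y | 1 ≤ ‖y‖ ∧ ‖x‖ / 2 ≤ ‖y‖ ∧ ‖y‖ ≤ 2 * ‖x‖},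
          ENNReal.ofReal (‖y‖ ^ a * Real.log (s * ‖y‖) ^ b * ‖x - y‖ ^ (α - finrank ℝ E)) ∂μ ≤
        ENNReal.ofReal (C * ‖x‖ ^ (α + a) * Real.log (s * ‖x‖) ^ b) := by
  set n : ℝ := (finrank ℝ E : ℝ)
  obtain ⟨CL, hCL, hlog⟩ := Real.exists_log_rpow_le hs hb one_pos
  obtain ⟨K, hK, hint⟩ := exists_setLIntegral_ball_norm_rpow_eq μ hE (t := α - n) (by linarith)
  refine ⟨2 ^ (-a) * CL * 2 * 4 ^ α * K, by positivity, fun x hx ↦ ?_⟩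
  set X := ‖x‖
  have hX : 0 < X := by linarith
  have hLX : 0 ≤ Real.log (s * X) := Real.log_nonneg (by nlinarith)
  set M := 2 ^ (-a) * CL * 2 * X ^ a * Real.log (s * X) ^ b with hM
  have hpoint : ∀ y ∈ {y : E | 1 ≤ ‖y‖ ∧ X / 2 ≤ ‖y‖ ∧ ‖y‖ ≤ 2 * X},
      ‖y‖ ^ a * Real.log (s * ‖y‖) ^ b * ‖x - y‖ ^ (α - n) ≤ M * ‖x - y‖ ^ (α - n) := by
    rintro y ⟨hy1, hyX, hy2X⟩
    have hpow : ‖y‖ ^ a ≤ 2 ^ (-a) * X ^ a := Real.rpow_le_two_rpow_mul_rpow hX hyX ha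
    have hlogy : Real.log (s * ‖y‖) ^ b ≤ CL * 2 * Real.log (s * X) ^ b := by
      simpa using hlog X ‖y‖ 2 hx hy1 one_le_two hy2X
    calc ‖y‖ ^ a * Real.log (s * ‖y‖) ^ b * ‖x - y‖ ^ (α - n)
        ≤ 2 ^ (-a) * X ^ a * (CL * 2 * Real.log (s * X) ^ b) * ‖x - y‖ ^ (α - n) := by
          gcongr
          exact Real.rpow_nonneg (Real.log_nonneg (by nlinarith)) b
      _ = M * ‖x - y‖ ^ (α - n) := by rw [hM]; ring
  have hsub : {y : E | 1 ≤ ‖y‖ ∧ X / 2 ≤ ‖y‖ ∧ ‖y‖ ≤ 2 * X} ⊆ ball x (4 * X) := by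
    rintro y ⟨-, -, hy2X⟩
    rw [mem_ball, dist_eq_norm, norm_sub_rev]
    linarith [norm_sub_le x y]
  calc _ ≤ ENNReal.ofReal M * ∫⁻ y in ball x (4 * X), ENNReal.ofReal (‖x - y‖ ^ (α - n)) ∂μ :=
        setLIntegral_ofReal_le_ofReal_mul (by positivity) (by fun_prop) hsub hpoint
    _ = ENNReal.ofReal (M * ((4 * X) ^ (n + (α - n)) * K)) := by
        rw [setLIntegral_ball_norm_sub_rpow, hint _ (by positivity),
          ← ENNReal.ofReal_mul (by positivity)]
    _ = ENNReal.ofReal (2 ^ (-a) * CL * 2 * 4 ^ α * K * X ^ (α + a) * Real.log (s * X) ^ b) := by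
        rw [add_sub_cancel, Real.mul_rpow (by norm_num) hX.le, Real.rpow_add hX, hM]
        congr 1
        ring

theorem exists_setLIntegral_riesz_near_le (hs : 1 < s) (hb : 0 ≤ b)
    (ha : -(finrank ℝ E : ℝ) < a) (hα : α ≤ finrank ℝ E) (hE : 1 ≤ finrank ℝ E) :
    ∃ C, 0 ≤ C ∧ ∀ x : E, 1 ≤ ‖x‖ →
      ∫⁻ y in {y | 1 ≤ ‖y‖ ∧ ‖y‖ < ‖x‖ / 2},
          ENNReal.ofReal (‖y‖ ^ a * Real.log (s * ‖y‖) ^ b * ‖x - y‖ ^ (α - finrank ℝ E)) ∂μ ≤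
        ENNReal.ofReal (C * ‖x‖ ^ (α + a) * Real.log (s * ‖x‖) ^ b) := by
  obtain ⟨CL, hCL, hlog⟩ := Real.exists_log_rpow_le hs hb one_pos
  obtain ⟨K, hK, hint⟩ := exists_setLIntegral_ball_norm_rpow_eq μ hE ha
  set n : ℝ := (finrank ℝ E : ℝ)
  refine ⟨2 ^ (n - α) * CL * K, by positivity, fun x hx ↦ ?_⟩
  set X := ‖x‖
  have hX : 0 < X := by linarith
  have hLX : 0 ≤ Real.log (s * X) := Real.log_nonneg (by nlinarith)
  set M := 2 ^ (n - α) * X ^ (α - n) * CL * Real.log (s * X) ^ b with hM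
  have hpoint : ∀ y ∈ {y : E | 1 ≤ ‖y‖ ∧ ‖y‖ < X / 2},
      ‖y‖ ^ a * Real.log (s * ‖y‖) ^ b * ‖x - y‖ ^ (α - n) ≤ M * ‖y‖ ^ a := by
    rintro y ⟨hy1, hyX⟩
    have hkernel : ‖x - y‖ ^ (α - n) ≤ 2 ^ (n - α) * X ^ (α - n) := by
      have := norm_sub_norm_le x y
      simpa using Real.rpow_le_two_rpow_mul_rpow hX (by linarith) (by linarith : α - n ≤ 0)
    have hlogy : Real.log (s * ‖y‖) ^ b ≤ CL * Real.log (s * X) ^ b := by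
      simpa using hlog X ‖y‖ 1 hx hy1 le_rfl (by linarith)
    calc ‖y‖ ^ a * Real.log (s * ‖y‖) ^ b * ‖x - y‖ ^ (α - n)
        ≤ ‖y‖ ^ a * (CL * Real.log (s * X) ^ b) * (2 ^ (n - α) * X ^ (α - n)) := by
          gcongr ?_ * ?_ * ?_
      _ = M * ‖y‖ ^ a := by rw [hM]; ring
  have hsub : {y : E | 1 ≤ ‖y‖ ∧ ‖y‖ < X / 2} ⊆ ball 0 X := by
    rintro y ⟨-, hyX⟩
    rw [mem_ball_zero_iff]
    linarith
  calc _ ≤ ENNReal.ofReal M * ∫⁻ y in ball 0 X, ENNReal.ofReal (‖y‖ ^ a) ∂μ :=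
        setLIntegral_ofReal_le_ofReal_mul (by positivity) (by fun_prop) hsub hpoint
    _ = ENNReal.ofReal (M * (X ^ (n + a) * K)) := by
        rw [hint _ hX, ← ENNReal.ofReal_mul (by positivity)]
    _ = ENNReal.ofReal (2 ^ (n - α) * CL * K * X ^ (α + a) * Real.log (s * X) ^ b) := by
        have hXa : X ^ (α + a) = X ^ (α - n) * X ^ (n + a) := by
          rw [← Real.rpow_add hX]; ring_nf
        rw [hXa, hM]
        congr 1
        ring

theorem exists_setLIntegral_riesz_le (hs : 1 < s) (hb : 0 ≤ b)
    (ha : -(finrank ℝ E : ℝ) < a) (hα : 0 < α) (hαa : α + a < 0) :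
    ∃ C, 0 < C ∧ ∀ x : E, 1 ≤ ‖x‖ →
      ∫⁻ y in {y | 1 ≤ ‖y‖},
          ENNReal.ofReal (‖y‖ ^ a * Real.log (s * ‖y‖) ^ b * ‖x - y‖ ^ (α - finrank ℝ E)) ∂μ ≤
        ENNReal.ofReal (C * ‖x‖ ^ (α + a) * Real.log (s * ‖x‖) ^ b) := by
  have hE : 1 ≤ finrank ℝ E := by
    have : (0 : ℝ) < finrank ℝ E := by linarith
    exact_mod_cast this
  obtain ⟨C₁, hC₁, hfar⟩ := exists_setLIntegral_riesz_far_le μ hs hb hαa (by linarith)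
  obtain ⟨C₂, hC₂, hannulus⟩ :=
    exists_setLIntegral_riesz_annulus_le μ (a := a) hs hb (by linarith) hα hE
  obtain ⟨C₃, hC₃, hnear⟩ :=
    exists_setLIntegral_riesz_near_le μ (α := α) hs hb ha (by linarith) hE
  refine ⟨C₁ + C₂ + C₃ + 1, by positivity, fun x hx ↦ ?_⟩
  have hcover : {y : E | 1 ≤ ‖y‖} ⊆ {y | 2 * ‖x‖ ≤ ‖y‖} ∪
      {y | 1 ≤ ‖y‖ ∧ ‖x‖ / 2 ≤ ‖y‖ ∧ ‖y‖ ≤ 2 * ‖x‖} ∪ {y | 1 ≤ ‖y‖ ∧ ‖y‖ < ‖x‖ / 2} := by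
    intro y (hy : 1 ≤ ‖y‖)
    by_cases h₁ : 2 * ‖x‖ ≤ ‖y‖
    · exact .inl (.inl h₁)
    by_cases h₂ : ‖x‖ / 2 ≤ ‖y‖
    · exact .inl (.inr ⟨hy, h₂, by linarith⟩)
    · exact .inr ⟨hy, by linarith⟩
  have hT : 0 ≤ ‖x‖ ^ (α + a) * Real.log (s * ‖x‖) ^ b :=
    mul_nonneg (by positivity) (Real.rpow_nonneg (Real.log_nonneg (by nlinarith)) b)
  have hCT {C : ℝ} (hC : 0 ≤ C) : 0 ≤ C * ‖x‖ ^ (α + a) * Real.log (s * ‖x‖) ^ b := by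
    rw [mul_assoc]; exact mul_nonneg hC hT
  refine (lintegral_mono_set hcover).trans <| (lintegral_union_le _ _ _).trans <|
    (add_le_add_left (lintegral_union_le _ _ _) _).trans <|
    (add_le_add (add_le_add (hfar x hx) (hannulus x hx)) (hnear x hx)).trans ?_
  rw [← ENNReal.ofReal_add (hCT hC₁) (hCT hC₂),
    ← ENNReal.ofReal_add (add_nonneg (hCT hC₁) (hCT hC₂)) (hCT hC₃)]
  exact ENNReal.ofReal_le_ofReal (by nlinarith)

end Riesz

theorem stmt_9_general (N : ℕ) (α p γ τ s c : ℝ)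
    (hα0 : 0 < α) (hp : 0 < p) (hτ : 0 ≤ τ)
    (hs : 1 < s) (hc : 0 < c) (hpγ : α + p * γ < 0) (hpγN : p * |γ| < N)
    (f : EuclideanSpace ℝ (Fin N) → ℝ)
    (hf0 : ∀ y, 0 ≤ f y)
    (hf : ∀ y : EuclideanSpace ℝ (Fin N), 1 ≤ ‖y‖ →
      f y ≤ c * ‖y‖ ^ γ * Real.log (s * ‖y‖) ^ τ) :
    ∃ C : ℝ, 0 < C ∧ ∀ x : EuclideanSpace ℝ (Fin N), 1 ≤ ‖x‖ →
      ∫⁻ y in {y : EuclideanSpace ℝ (Fin N) | 1 ≤ ‖y‖},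
          ENNReal.ofReal (f y ^ p / ‖x - y‖ ^ ((N : ℝ) - α)) ≤
        ENNReal.ofReal (C * ‖x‖ ^ (α + p * γ) * Real.log (s * ‖x‖) ^ (p * τ)) := by
  obtain ⟨C, hC, hbound⟩ := exists_setLIntegral_riesz_le volume (a := p * γ) hs
    (mul_nonneg hp.le hτ) (by rw [finrank_euclideanSpace_fin]; nlinarith [neg_abs_le γ]) hα0 hpγ
  rw [finrank_euclideanSpace_fin] at hbound
  refine ⟨c ^ p * C, by positivity, fun x hx ↦ ?_⟩
  have hpoint : ∀ y ∈ {y : EuclideanSpace ℝ (Fin N) | 1 ≤ ‖y‖},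
      f y ^ p / ‖x - y‖ ^ ((N : ℝ) - α) ≤
        c ^ p * (‖y‖ ^ (p * γ) * Real.log (s * ‖y‖) ^ (p * τ) * ‖x - y‖ ^ (α - N)) := by
    intro y (hy : 1 ≤ ‖y‖)
    have hfp := Real.rpow_le_mul_rpow_mul_rpow (hf0 y) hc.le (norm_nonneg y)
      (Real.log_nonneg (by nlinarith)) hp.le (hf y hy)
    rw [div_eq_mul_inv, ← Real.rpow_neg (norm_nonneg _), neg_sub, ← mul_assoc, ← mul_assoc]
    gcongr
  calc _ ≤ ENNReal.ofReal (c ^ p) *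
          ENNReal.ofReal (C * ‖x‖ ^ (α + p * γ) * Real.log (s * ‖x‖) ^ (p * τ)) :=
        (setLIntegral_ofReal_le_ofReal_mul (by positivity) (by fun_prop) subset_rfl hpoint).trans
          (by gcongr; exact hbound x hx)
    _ = ENNReal.ofReal (c ^ p * C * ‖x‖ ^ (α + p * γ) * Real.log (s * ‖x‖) ^ (p * τ)) := by
        rw [← ENNReal.ofReal_mul (by positivity)]
        congr 1
        ring

/-- If 0 ≤ f(y) ≤ c‖y‖^γ log^τ(s‖y‖) for ‖y‖ ≥ 1, with α+pγ<0 and p|γ|<N, then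
∫_{‖y‖≥1} f(y)^p/‖x-y‖^(N-α) dy ≤ C‖x‖^(α+pγ) log^(pτ)(s‖x‖) for all ‖x‖ ≥ 1. -/
theorem stmt_9 (N : ℕ) (hN : 1 ≤ N) (α p γ τ s c : ℝ)
    (hα0 : 0 < α) (hαN : α < N) (hp : 0 < p) (hγ : γ < 0) (hτ : 0 ≤ τ)
    (hs : 1 < s) (hc : 0 < c) (hpγ : α + p * γ < 0) (hpγN : p * |γ| < N)
    (f : EuclideanSpace ℝ (Fin N) → ℝ)
    (hf0 : ∀ y, 0 ≤ f y)
    (hf : ∀ y : EuclideanSpace ℝ (Fin N), 1 ≤ ‖y‖ →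
      f y ≤ c * ‖y‖ ^ γ * Real.log (s * ‖y‖) ^ τ) :
    ∃ C : ℝ, 0 < C ∧ ∀ x : EuclideanSpace ℝ (Fin N), 1 ≤ ‖x‖ →
      ∫⁻ y in {y : EuclideanSpace ℝ (Fin N) | 1 ≤ ‖y‖},
          ENNReal.ofReal (f y ^ p / ‖x - y‖ ^ ((N : ℝ) - α)) ≤
        ENNReal.ofReal (C * ‖x‖ ^ (α + p * γ) * Real.log (s * ‖x‖) ^ (p * τ)) :=
  stmt_9_general N α p γ τ s c hα0 hp hτ hs hc hpγ hpγN f hf0 hf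
end

section
/- Let N ≥ 1, α ∈ (0,N), p > 0, γ < 0, τ ≥ 0, s > 1, c > 0 with α + pγ < 0 and p|γ| > N. Suppose 0 ≤ f(y) ≤ c|y|^γ log^τ(s|y|) for |y| ≥ 1. Then there exists C > 0 such that for all |x| ≥ 1: ∫_{|y|≥1} f(y)^p/|x-y|^{N-α} dy ≤ C |x|^{α-N}. -/
/-!
Raise the pointwise bound to the power `p` and absorb the logarithm into the power: for any
`β` with `N < β < -pγ` one gets `f(y)^p ≤ K ‖y‖^(-β)` on `‖y‖ ≥ 1`. For such a profile, split
the Riesz integral at distance `R = ‖x‖/2` from `x`. Away from `x` the kernel is at most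
`R^(α-N)` and `‖y‖^(-β)` is integrable on the exterior of the unit ball since `β > N`. Near `x`
one has `‖y‖ ≥ R`, so `‖y‖^(-β) ≤ R^(-N)`, while by scaling the kernel integrates over `B(x, R)`
to a constant times `R^α`. Both pieces are `O(R^(α-N)) = O(‖x‖^(α-N))`.
-/

open MeasureTheory Metric Set Module

theorem Real.exists_rpow_mul_log_rpow_le {s a b e : ℝ} (hs : 1 ≤ s) (he : 0 ≤ e) (hab : a < b) :
    ∃ M, 0 < M ∧ ∀ t, 1 ≤ t → t ^ a * Real.log (s * t) ^ e ≤ M * t ^ b := by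
  set ε := (b - a) / (e + 1)
  have hε : 0 < ε := div_pos (by linarith) (by linarith)
  have hεe : ε * e ≤ b - a := by
    rw [div_mul_eq_mul_div, div_le_iff₀ (by linarith)]
    nlinarith
  refine ⟨(s ^ ε / ε) ^ e, by positivity, fun t ht => ?_⟩
  have ht0 : 0 < t := by linarith
  have hst : 1 ≤ s * t := one_le_mul_of_one_le_of_one_le hs ht
  -- `log x ≤ x ^ ε / ε`, with `ε` small enough that the power `ε * e` stays below `b - a`
  have hlog : Real.log (s * t) ^ e ≤ (s ^ ε / ε) ^ e * t ^ (b - a) :=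
    calc Real.log (s * t) ^ e ≤ ((s * t) ^ ε / ε) ^ e :=
          Real.rpow_le_rpow (Real.log_nonneg hst) (Real.log_le_rpow_div (by positivity) hε) he
      _ = (s ^ ε / ε) ^ e * t ^ (ε * e) := by
          rw [Real.mul_rpow (by positivity) ht0.le, mul_div_right_comm,
            Real.mul_rpow (by positivity) (by positivity), ← Real.rpow_mul ht0.le]
      _ ≤ (s ^ ε / ε) ^ e * t ^ (b - a) := by gcongr
  calc t ^ a * Real.log (s * t) ^ e ≤ t ^ a * ((s ^ ε / ε) ^ e * t ^ (b - a)) := by gcongr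
    _ = (s ^ ε / ε) ^ e * t ^ b := by
        rw [mul_left_comm, ← Real.rpow_add ht0, add_sub_cancel]

theorem Real.exists_rpow_le_of_le_mul_rpow_mul_log_rpow {s p γ τ c β : ℝ} (hs : 1 ≤ s)
    (hp : 0 ≤ p) (hτ : 0 ≤ τ) (hc : 0 < c) (hβ : β < -(p * γ)) :
    ∃ K, 0 < K ∧ ∀ t u, 1 ≤ t → 0 ≤ u → u ≤ c * t ^ γ * Real.log (s * t) ^ τ →
      u ^ p ≤ K * t ^ (-β) := by
  obtain ⟨M, hM, hlog⟩ := Real.exists_rpow_mul_log_rpow_le (a := p * γ) (b := -β) hs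
    (mul_nonneg hp hτ) (by linarith)
  refine ⟨c ^ p * M, by positivity, fun t u ht hu hut => ?_⟩
  have ht0 : 0 ≤ t := by linarith
  have hlog0 : 0 ≤ Real.log (s * t) := Real.log_nonneg (one_le_mul_of_one_le_of_one_le hs ht)
  calc u ^ p ≤ (c * t ^ γ * Real.log (s * t) ^ τ) ^ p := Real.rpow_le_rpow hu hut hp
    _ = c ^ p * (t ^ (p * γ) * Real.log (s * t) ^ (p * τ)) := by
        rw [Real.mul_rpow (by positivity) (by positivity), Real.mul_rpow hc.le (by positivity),
          ← Real.rpow_mul ht0, ← Real.rpow_mul hlog0, mul_comm γ, mul_comm τ, mul_assoc]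
    _ ≤ c ^ p * M * t ^ (-β) := by
        rw [mul_assoc]
        exact mul_le_mul_of_nonneg_left (hlog t ht) (by positivity)

theorem ENNReal.ofReal_div_rpow {u t : ℝ} (ht : 0 ≤ t) (b : ℝ) :
    ENNReal.ofReal (u / t ^ b) = ENNReal.ofReal u * ENNReal.ofReal (t ^ (-b)) := by
  rw [div_eq_mul_inv, ← Real.rpow_neg ht, ENNReal.ofReal_mul' (by positivity)]

theorem setLIntegral_sdiff_ball_div_rpow_le {E : Type*} [NormedAddCommGroup E]
    [MeasurableSpace E] [OpensMeasurableSpace E] (μ : Measure E) {s : Set E} (hs : MeasurableSet s)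
    (g : E → ℝ) (x : E) {R b : ℝ} (hR : 0 < R) (hb : 0 ≤ b) :
    ∫⁻ y in s \ ball x R, ENNReal.ofReal (g y / ‖x - y‖ ^ b) ∂μ ≤
      ENNReal.ofReal (R ^ (-b)) * ∫⁻ y in s, ENNReal.ofReal (g y) ∂μ := by
  calc _ ≤ ∫⁻ y in s \ ball x R, ENNReal.ofReal (R ^ (-b)) * ENNReal.ofReal (g y) ∂μ := by
        refine setLIntegral_mono' (hs.diff measurableSet_ball) fun y ⟨_, hy⟩ => ?_
        rw [mem_ball, dist_comm, dist_eq_norm, not_lt] at hy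
        rw [ENNReal.ofReal_div_rpow (norm_nonneg _), mul_comm]
        exact mul_le_mul_left
          (ENNReal.ofReal_le_ofReal (Real.rpow_le_rpow_of_nonpos hR hy (neg_nonpos.2 hb))) _
    _ ≤ ENNReal.ofReal (R ^ (-b)) * ∫⁻ y in s, ENNReal.ofReal (g y) ∂μ := by
        rw [lintegral_const_mul' _ _ ENNReal.ofReal_ne_top]
        gcongr
        exact sdiff_subset

section RieszPotential

variable {E : Type*} [NormedAddCommGroup E] [NormedSpace ℝ E] [FiniteDimensional ℝ E]
  [MeasurableSpace E] [BorelSpace E] (μ : Measure E) [μ.IsAddHaarMeasure]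

theorem setLIntegral_ball_norm_sub_rpow_s10 (x : E) {R : ℝ} (hR : 0 < R) (a : ℝ) :
    ∫⁻ y in ball x R, ENNReal.ofReal (‖x - y‖ ^ a) ∂μ =
      ENNReal.ofReal (R ^ (a + finrank ℝ E)) * ∫⁻ z in ball 0 1, ENNReal.ofReal (‖z‖ ^ a) ∂μ := by
  set T : E → E := fun w => x + R • w
  have himage : T '' ball 0 1 = ball x R := by
    have : T = (x +ᵥ ·) ∘ (R • ·) := rfl
    rw [this, image_comp, image_smul, smul_unitBall_of_pos hR, image_vadd, vadd_ball, vadd_eq_add,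
      add_zero]
  have hderiv (w : E) : HasFDerivAt T (R • ContinuousLinearMap.id ℝ E) w :=
    ((R • ContinuousLinearMap.id ℝ E).hasFDerivAt (x := w)).const_add x
  have hdet : (R • ContinuousLinearMap.id ℝ E).det = R ^ finrank ℝ E := by
    rw [ContinuousLinearMap.det, ContinuousLinearMap.toLinearMap_smul, LinearMap.det_smul]
    simp
  have hinj : InjOn T (ball 0 1) :=
    ((add_right_injective x).comp (smul_right_injective E hR.ne')).injOn
  rw [← himage, lintegral_image_eq_lintegral_abs_det_fderiv_mul μ measurableSet_ball
    (fun w _ => (hderiv w).hasFDerivWithinAt) hinj,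
    ← lintegral_const_mul' _ _ ENNReal.ofReal_ne_top]
  refine setLIntegral_congr_fun measurableSet_ball fun w _ => ?_
  rw [hdet, abs_of_pos (by positivity), ← ENNReal.ofReal_mul (by positivity),
    ← ENNReal.ofReal_mul (by positivity), sub_add_cancel_left, norm_neg, norm_smul,
    Real.norm_of_nonneg hR.le, Real.mul_rpow hR.le (norm_nonneg _), Real.rpow_add hR,
    Real.rpow_natCast]
  congr 1
  ring

theorem setLIntegral_ball_zero_norm_rpow_lt_top [Nontrivial E] {a : ℝ}
    (ha : -(finrank ℝ E : ℝ) < a) :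
    ∫⁻ z in ball 0 1, ENNReal.ofReal (‖z‖ ^ a) ∂μ < ⊤ := by
  refine IntegrableOn.setLIntegral_lt_top (integrableOn_ball_of_norm_le_rpow (C := 1) (α := -a)
    finrank_pos (by linarith) (ae_of_all _ fun z => ?_)
    (measurable_norm.pow_const _).aestronglyMeasurable)
  rw [neg_neg, one_mul, Real.norm_of_nonneg (by positivity)]

theorem setLIntegral_one_le_norm_rpow_neg_lt_top {β : ℝ} (hβ : (finrank ℝ E : ℝ) < β) :
    ∫⁻ y in {y : E | 1 ≤ ‖y‖}, ENNReal.ofReal (‖y‖ ^ (-β)) ∂μ < ⊤ := by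
  refine IntegrableOn.setLIntegral_lt_top (Integrable.mono'
    ((integrable_one_add_norm hβ).const_mul (2 ^ β)).integrableOn
    (measurable_norm.pow_const _).aestronglyMeasurable
    (ae_restrict_of_forall_mem (measurableSet_le measurable_const measurable_norm) ?_))
  intro y (hy : 1 ≤ ‖y‖)
  calc ‖‖y‖ ^ (-β)‖ = 2 ^ β * (2 * ‖y‖) ^ (-β) := by
        rw [Real.norm_of_nonneg (by positivity), Real.mul_rpow zero_le_two (norm_nonneg y),
          ← mul_assoc, ← Real.rpow_add zero_lt_two, add_neg_cancel, Real.rpow_zero, one_mul]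
    _ ≤ 2 ^ β * (1 + ‖y‖) ^ (-β) := mul_le_mul_of_nonneg_left
        (Real.rpow_le_rpow_of_nonpos (by positivity) (by linarith) (by linarith)) (by positivity)

theorem setLIntegral_inter_ball_div_rpow_le {s : Set E} (hs : MeasurableSet s) (g : E → ℝ)
    (x : E) {R A : ℝ} (b : ℝ) (hR : 0 < R) (hg : ∀ y ∈ s ∩ ball x R, g y ≤ A) :
    ∫⁻ y in s ∩ ball x R, ENNReal.ofReal (g y / ‖x - y‖ ^ b) ∂μ ≤
      ENNReal.ofReal A * ENNReal.ofReal (R ^ (-b + finrank ℝ E)) *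
        ∫⁻ z in ball 0 1, ENNReal.ofReal (‖z‖ ^ (-b)) ∂μ := by
  calc _ ≤ ∫⁻ y in s ∩ ball x R, ENNReal.ofReal A * ENNReal.ofReal (‖x - y‖ ^ (-b)) ∂μ := by
        refine setLIntegral_mono' (hs.inter measurableSet_ball) fun y hy => ?_
        rw [ENNReal.ofReal_div_rpow (norm_nonneg _)]
        gcongr
        exact hg y hy
    _ ≤ ENNReal.ofReal A * ∫⁻ y in ball x R, ENNReal.ofReal (‖x - y‖ ^ (-b)) ∂μ := by
        rw [lintegral_const_mul' _ _ ENNReal.ofReal_ne_top]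
        gcongr
        exact inter_subset_right
    _ = _ := by rw [setLIntegral_ball_norm_sub_rpow_s10 μ x hR, mul_assoc]

theorem exists_setLIntegral_one_le_norm_rpow_div_le [Nontrivial E] {α β : ℝ} (hα : 0 < α)
    (hαn : α ≤ finrank ℝ E) (hβ : (finrank ℝ E : ℝ) < β) :
    ∃ C : ℝ, 0 < C ∧ ∀ x : E, x ≠ 0 →
      ∫⁻ y in {y : E | 1 ≤ ‖y‖},
          ENNReal.ofReal (‖y‖ ^ (-β) / ‖x - y‖ ^ ((finrank ℝ E : ℝ) - α)) ∂μ ≤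
        ENNReal.ofReal (C * ‖x‖ ^ (α - finrank ℝ E)) := by
  set n : ℝ := (finrank ℝ E : ℝ)
  set S := {y : E | 1 ≤ ‖y‖}
  have hS : MeasurableSet S := measurableSet_le measurable_const measurable_norm
  set J := ∫⁻ y in S, ENNReal.ofReal (‖y‖ ^ (-β)) ∂μ
  set D := ∫⁻ z in ball 0 1, ENNReal.ofReal (‖z‖ ^ (-(n - α))) ∂μ
  have hJD : J + D ≠ ⊤ := ENNReal.add_ne_top.2
    ⟨(setLIntegral_one_le_norm_rpow_neg_lt_top μ hβ).ne,
      (setLIntegral_ball_zero_norm_rpow_lt_top μ (by linarith)).ne⟩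
  refine ⟨2 ^ (n - α) * ((J + D).toReal + 1), by positivity, fun x hx => ?_⟩
  set R := ‖x‖ / 2 with hRdef
  have hR : 0 < R := by positivity
  have hnear (y : E) (hy : y ∈ S ∩ ball x R) : ‖y‖ ^ (-β) ≤ R ^ (-n) := by
    obtain ⟨hy1 : 1 ≤ ‖y‖, hyx⟩ := hy
    rw [mem_ball, dist_comm, dist_eq_norm] at hyx
    have hRy : R ≤ ‖y‖ := by linarith [norm_sub_norm_le x y, hRdef]
    calc ‖y‖ ^ (-β) ≤ ‖y‖ ^ (-n) := Real.rpow_le_rpow_of_exponent_le hy1 (by linarith)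
      _ ≤ R ^ (-n) := Real.rpow_le_rpow_of_nonpos hR hRy (by simp [n])
  have hRpow : R ^ (α - n) = 2 ^ (n - α) * ‖x‖ ^ (α - n) := by
    rw [Real.div_rpow (norm_nonneg x) zero_le_two, div_eq_mul_inv, ← Real.rpow_neg zero_le_two,
      neg_sub, mul_comm]
  calc _ ≤ (∫⁻ y in S \ ball x R, ENNReal.ofReal (‖y‖ ^ (-β) / ‖x - y‖ ^ (n - α)) ∂μ) +
        ∫⁻ y in S ∩ ball x R, ENNReal.ofReal (‖y‖ ^ (-β) / ‖x - y‖ ^ (n - α)) ∂μ := by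
        conv_lhs => rw [← sdiff_union_inter S (ball x R)]
        exact lintegral_union_le _ _ _
    _ ≤ ENNReal.ofReal (R ^ (-(n - α))) * J +
        ENNReal.ofReal (R ^ (-n)) * ENNReal.ofReal (R ^ (-(n - α) + n)) * D :=
        add_le_add (setLIntegral_sdiff_ball_div_rpow_le μ hS _ x hR (by linarith))
          (setLIntegral_inter_ball_div_rpow_le μ hS _ x _ hR hnear)
    _ = ENNReal.ofReal (R ^ (α - n) * (J + D).toReal) := by
        rw [← ENNReal.ofReal_mul (by positivity), ← Real.rpow_add hR, ENNReal.ofReal_mul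
          (by positivity), ENNReal.ofReal_toReal hJD, neg_sub, sub_add_cancel, neg_add_eq_sub,
          mul_add]
    _ ≤ ENNReal.ofReal (2 ^ (n - α) * ((J + D).toReal + 1) * ‖x‖ ^ (α - n)) := by
        rw [hRpow, mul_right_comm]
        gcongr
        exact le_add_of_nonneg_right zero_le_one

end RieszPotential

theorem stmt_10_general (N : ℕ) (hN : 1 ≤ N) (α p γ τ s c : ℝ)
    (hα0 : 0 < α) (hαN : α < N) (hp : 0 < p) (hγ : γ < 0) (hτ : 0 ≤ τ)
    (hs : 1 < s) (hc : 0 < c) (hpγN : (N : ℝ) < p * |γ|)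
    (f : EuclideanSpace ℝ (Fin N) → ℝ)
    (hf0 : ∀ y, 0 ≤ f y)
    (hf : ∀ y : EuclideanSpace ℝ (Fin N), 1 ≤ ‖y‖ →
      f y ≤ c * ‖y‖ ^ γ * Real.log (s * ‖y‖) ^ τ) :
    ∃ C : ℝ, 0 < C ∧ ∀ x : EuclideanSpace ℝ (Fin N), 1 ≤ ‖x‖ →
      ∫⁻ y in {y : EuclideanSpace ℝ (Fin N) | 1 ≤ ‖y‖},
          ENNReal.ofReal (f y ^ p / ‖x - y‖ ^ ((N : ℝ) - α)) ≤
        ENNReal.ofReal (C * ‖x‖ ^ (α - N)) := by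
  have : Nonempty (Fin N) := ⟨⟨0, hN⟩⟩
  rw [abs_of_neg hγ, mul_neg] at hpγN
  obtain ⟨β, hNβ, hβpγ⟩ := exists_between hpγN
  obtain ⟨K, hK, hdecay⟩ :=
    Real.exists_rpow_le_of_le_mul_rpow_mul_log_rpow hs.le hp.le hτ hc hβpγ
  obtain ⟨C, hC, hriesz⟩ := exists_setLIntegral_one_le_norm_rpow_div_le
    (volume : Measure (EuclideanSpace ℝ (Fin N))) (β := β) hα0 (by simpa using hαN.le)
    (by simpa using hNβ)
  simp only [finrank_euclideanSpace_fin] at hriesz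
  refine ⟨K * C, by positivity, fun x hx => ?_⟩
  calc _ ≤ ∫⁻ y in {y : EuclideanSpace ℝ (Fin N) | 1 ≤ ‖y‖},
          ENNReal.ofReal K * ENNReal.ofReal (‖y‖ ^ (-β) / ‖x - y‖ ^ ((N : ℝ) - α)) := by
        refine setLIntegral_mono' (measurableSet_le measurable_const measurable_norm)
          fun y (hy : 1 ≤ ‖y‖) => ?_
        rw [← ENNReal.ofReal_mul hK.le, ← mul_div_assoc]
        gcongr
        exact hdecay _ _ hy (hf0 y) (hf y hy)
    _ ≤ ENNReal.ofReal K * ENNReal.ofReal (C * ‖x‖ ^ (α - N)) := by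
        rw [lintegral_const_mul' _ _ ENNReal.ofReal_ne_top]
        gcongr
        exact hriesz x (norm_pos_iff.1 (zero_lt_one.trans_le hx))
    _ = ENNReal.ofReal (K * C * ‖x‖ ^ (α - N)) := by
        rw [← ENNReal.ofReal_mul hK.le, mul_assoc]

/-- If 0 ≤ f(y) ≤ c‖y‖^γ log^τ(s‖y‖) for ‖y‖ ≥ 1, with α+pγ<0 and p|γ|>N, then
∫_{‖y‖≥1} f(y)^p/‖x-y‖^(N-α) dy ≤ C‖x‖^(α-N) for all ‖x‖ ≥ 1. -/
theorem stmt_10 (N : ℕ) (hN : 1 ≤ N) (α p γ τ s c : ℝ)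
    (hα0 : 0 < α) (hαN : α < N) (hp : 0 < p) (hγ : γ < 0) (hτ : 0 ≤ τ)
    (hs : 1 < s) (hc : 0 < c) (hpγ : α + p * γ < 0) (hpγN : (N : ℝ) < p * |γ|)
    (f : EuclideanSpace ℝ (Fin N) → ℝ)
    (hf0 : ∀ y, 0 ≤ f y)
    (hf : ∀ y : EuclideanSpace ℝ (Fin N), 1 ≤ ‖y‖ →
      f y ≤ c * ‖y‖ ^ γ * Real.log (s * ‖y‖) ^ τ) :
    ∃ C : ℝ, 0 < C ∧ ∀ x : EuclideanSpace ℝ (Fin N), 1 ≤ ‖x‖ →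
      ∫⁻ y in {y : EuclideanSpace ℝ (Fin N) | 1 ≤ ‖y‖},
          ENNReal.ofReal (f y ^ p / ‖x - y‖ ^ ((N : ℝ) - α)) ≤
        ENNReal.ofReal (C * ‖x‖ ^ (α - N)) :=
  stmt_10_general N hN α p γ τ s c hα0 hαN hp hγ hτ hs hc hpγN f hf0 hf
end

section
/- Assume N ≥ 1, m > 1, p > 0, q ∈ ℝ with p+q > m-1 and q < m-1. Suppose u : ℝ^N → (0,∞) is measurable and there exist constants C₁, C₂ > 0 and σ ∈ ℝ such that for all R > 2, (∫_{1<|x|<2R} u^p)(∫_{R<|x|<2R} u^{q-m+1}) ≤ C₁ R^σ and the annulus volume bound c R^N ≤ ∫_{R<|x|<2R} 1 holds. Then for all R > 2: ∫_{R<|x|<2R} u^{q-m+1} ≥ C R^{(N(p+m-1-q) - σ(m-1-q))/(p-m+1+q)}. -/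
open MeasureTheory

/-- Lower bound for ∫_{R<‖x‖<2R} u^(q-m+1) obtained by combining the Hölder inequality
on the annulus with the product bound (∫_{1<‖x‖<2R} u^p)(∫_{R<‖x‖<2R} u^(q-m+1)) ≤ C₁R^σ. -/
theorem stmt_14 (N : ℕ) (hN : 1 ≤ N) (m p q σ : ℝ) (hm : 1 < m) (hp : 0 < p)
    (hq : q < m - 1) (hpq : m - 1 < p + q)
    (u : EuclideanSpace ℝ (Fin N) → ℝ) (hu : Measurable u) (hu0 : ∀ x, 0 < u x)
    (C₁ c : ℝ) (hC₁ : 0 < C₁) (hc : 0 < c)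
    (hprod : ∀ R : ℝ, 2 < R →
      (∫⁻ x in {x : EuclideanSpace ℝ (Fin N) | 1 < ‖x‖ ∧ ‖x‖ < 2 * R},
          ENNReal.ofReal (u x ^ p)) *
      (∫⁻ x in {x : EuclideanSpace ℝ (Fin N) | R < ‖x‖ ∧ ‖x‖ < 2 * R},
          ENNReal.ofReal (u x ^ (q - m + 1))) ≤ ENNReal.ofReal (C₁ * R ^ σ))
    (hvol : ∀ R : ℝ, 2 < R →
      ENNReal.ofReal (c * R ^ (N : ℝ)) ≤
        ∫⁻ x in {x : EuclideanSpace ℝ (Fin N) | R < ‖x‖ ∧ ‖x‖ < 2 * R}, 1) :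
    ∃ C : ℝ, 0 < C ∧ ∀ R : ℝ, 2 < R →
      ENNReal.ofReal
          (C * R ^ (((N : ℝ) * (p + m - 1 - q) - σ * (m - 1 - q)) / (p - m + 1 + q))) ≤
        ∫⁻ x in {x : EuclideanSpace ℝ (Fin N) | R < ‖x‖ ∧ ‖x‖ < 2 * R},
          ENNReal.ofReal (u x ^ (q - m + 1)) := by
  have hs : (0:ℝ) < p + m - 1 - q := by linarith
  set s : ℝ := p + m - 1 - q with hs_def
  set α : ℝ := (m - 1 - q) / s with hα_def
  set β : ℝ := p / s with hβ_def
  have hα : 0 < α := div_pos (by linarith) hs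
  have hβ : 0 < β := div_pos hp hs
  have hαβ : α + β = 1 := by
    rw [hα_def, hβ_def, ← add_div, div_eq_one_iff_eq hs.ne', hs_def]; ring
  have he : 0 < β - α := by
    rw [hβ_def, hα_def, div_sub_div_same]
    exact div_pos (by linarith) hs
  set e : ℝ := β - α with he_def
  refine ⟨c ^ (1/e) * C₁ ^ (-(α/e)), by positivity, ?_⟩
  intro R hR
  have hR0 : (0:ℝ) < R := by linarith
  set I := ∫⁻ x in {x : EuclideanSpace ℝ (Fin N) | R < ‖x‖ ∧ ‖x‖ < 2 * R},
      ENNReal.ofReal (u x ^ (q - m + 1)) with hI_def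
  set A := ∫⁻ x in {x : EuclideanSpace ℝ (Fin N) | R < ‖x‖ ∧ ‖x‖ < 2 * R},
      ENNReal.ofReal (u x ^ p) with hA_def
  -- Hölder inequality on the annulus
  have hα1 : α < 1 := by linarith
  have hconj : (1/α).HolderConjugate (1/β) := by
    rw [Real.holderConjugate_iff]
    constructor
    · exact one_lt_one_div hα hα1
    · rw [one_div, one_div, inv_inv, inv_inv]; exact hαβ
  have hu_ne : ∀ x, ENNReal.ofReal (u x) ≠ 0 := fun x => by
    simp [ENNReal.ofReal_eq_zero, not_le, hu0 x]
  have key : ∀ (r : ℝ) (x : EuclideanSpace ℝ (Fin N)) (t : ℝ),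
      ENNReal.ofReal (u x ^ r) ^ t = ENNReal.ofReal (u x) ^ (r * t) := fun r x t => by
    rw [← ENNReal.ofReal_rpow_of_pos (hu0 x), ← ENNReal.rpow_mul]
  have holder := ENNReal.lintegral_mul_le_Lp_mul_Lq
    (volume.restrict {x : EuclideanSpace ℝ (Fin N) | R < ‖x‖ ∧ ‖x‖ < 2 * R}) hconj
    (f := fun x => ENNReal.ofReal (u x ^ p) ^ α)
    (g := fun x => ENNReal.ofReal (u x ^ (q - m + 1)) ^ β)
    ((by fun_prop : Measurable fun x => ENNReal.ofReal (u x ^ p) ^ α).aemeasurable)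
    ((by fun_prop : Measurable fun x =>
        ENNReal.ofReal (u x ^ (q - m + 1)) ^ β).aemeasurable)
  have hmul1 : ∀ x : EuclideanSpace ℝ (Fin N),
      ENNReal.ofReal (u x ^ p) ^ α * ENNReal.ofReal (u x ^ (q - m + 1)) ^ β = 1 := by
    intro x
    rw [key, key, ← ENNReal.rpow_add _ _ (hu_ne x) ENNReal.ofReal_ne_top]
    have : p * α + (q - m + 1) * β = 0 := by
      rw [hα_def, hβ_def]; field_simp; ring
    rw [this, ENNReal.rpow_zero]
  have hpow1 : ∀ x : EuclideanSpace ℝ (Fin N),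
      (ENNReal.ofReal (u x ^ p) ^ α) ^ (1/α) = ENNReal.ofReal (u x ^ p) := fun x => by
    rw [← ENNReal.rpow_mul, mul_one_div_cancel hα.ne', ENNReal.rpow_one]
  have hpow2 : ∀ x : EuclideanSpace ℝ (Fin N),
      (ENNReal.ofReal (u x ^ (q - m + 1)) ^ β) ^ (1/β) = ENNReal.ofReal (u x ^ (q - m + 1)) :=
    fun x => by rw [← ENNReal.rpow_mul, mul_one_div_cancel hβ.ne', ENNReal.rpow_one]
  simp only [Pi.mul_apply, hmul1, hpow1, hpow2, one_div_one_div] at holder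
  -- holder : ∫ 1 ≤ A ^ α * I ^ β
  have hRN : ENNReal.ofReal (c * R ^ (N:ℝ)) ≤ A ^ α * I ^ β := (hvol R hR).trans holder
  have hcRN : (0:ℝ) < c * R ^ (N:ℝ) := by positivity
  -- I ≠ 0
  have hI0 : I ≠ 0 := by
    intro h0
    rw [h0, ENNReal.zero_rpow_of_pos hβ, mul_zero, nonpos_iff_eq_zero,
      ENNReal.ofReal_eq_zero] at hRN
    exact absurd hRN (not_le.mpr hcRN)
  rcases eq_or_ne I ⊤ with hItop | hItop
  · exact le_top.trans (le_of_eq hItop.symm)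
  -- A * I ≤ ofReal (C₁ R^σ)
  have hAI : A * I ≤ ENNReal.ofReal (C₁ * R ^ σ) := by
    refine le_trans (mul_le_mul_left ?_ I) (hprod R hR)
    exact lintegral_mono_set (fun x hx => ⟨by linarith [hx.1], hx.2⟩)
  have hAle : A ≤ ENNReal.ofReal (C₁ * R ^ σ) / I :=
    (ENNReal.le_div_iff_mul_le (Or.inl hI0) (Or.inl hItop)).mpr hAI
  have hAtop : A ≠ ⊤ :=
    (hAle.trans_lt (ENNReal.div_lt_top ENNReal.ofReal_ne_top hI0)).ne
  set i := I.toReal with hi_def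
  set a := A.toReal with ha_def
  have hipos : 0 < i := ENNReal.toReal_pos hI0 hItop
  have hanneg : 0 ≤ a := ENNReal.toReal_nonneg
  have h2 : a * i ≤ C₁ * R ^ σ := by
    have := ENNReal.toReal_le_of_le_ofReal (by positivity) hAI
    rwa [ENNReal.toReal_mul] at this
  have h1 : c * R ^ (N:ℝ) ≤ a ^ α * i ^ β := by
    have hne : A ^ α * I ^ β ≠ ⊤ :=
      ENNReal.mul_ne_top (ENNReal.rpow_ne_top_of_nonneg hα.le hAtop)
        (ENNReal.rpow_ne_top_of_nonneg hβ.le hItop)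
    have := (ENNReal.ofReal_le_iff_le_toReal hne).mp hRN
    rwa [ENNReal.toReal_mul, ← ENNReal.toReal_rpow, ← ENNReal.toReal_rpow] at this
  -- real algebra
  have hCRσ : (0:ℝ) < C₁ * R ^ σ := by positivity
  have haupper : a ≤ (C₁ * R ^ σ) / i := (le_div_iff₀ hipos).mpr h2
  have hie : c * R ^ (N:ℝ) / (C₁ * R ^ σ) ^ α ≤ i ^ e := by
    have h3 : a ^ α ≤ ((C₁ * R ^ σ) / i) ^ α :=
      Real.rpow_le_rpow hanneg haupper hα.le
    have h4 : c * R ^ (N:ℝ) ≤ (C₁ * R ^ σ) ^ α / i ^ α * i ^ β := by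
      calc c * R ^ (N:ℝ) ≤ a ^ α * i ^ β := h1
        _ ≤ ((C₁ * R ^ σ) / i) ^ α * i ^ β := by
            exact mul_le_mul_of_nonneg_right h3 (Real.rpow_nonneg hipos.le _)
        _ = (C₁ * R ^ σ) ^ α / i ^ α * i ^ β := by
            rw [Real.div_rpow hCRσ.le hipos.le]
    have h5 : (C₁ * R ^ σ) ^ α / i ^ α * i ^ β = (C₁ * R ^ σ) ^ α * i ^ e := by
      rw [he_def, Real.rpow_sub hipos]
      field_simp
    rw [h5] at h4
    rw [div_le_iff₀ (by positivity)]
    linarith [h4]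
  have hfin : c ^ (1/e) * C₁ ^ (-(α/e)) *
      R ^ (((N : ℝ) * (p + m - 1 - q) - σ * (m - 1 - q)) / (p - m + 1 + q)) ≤ i := by
    have hib : (c * R ^ (N:ℝ) / (C₁ * R ^ σ) ^ α) ^ (1/e) ≤ (i ^ e) ^ (1/e) :=
      Real.rpow_le_rpow (by positivity) hie (by positivity)
    rw [← Real.rpow_mul hipos.le, mul_one_div_cancel he.ne', Real.rpow_one] at hib
    refine le_trans (le_of_eq ?_) hib
    have hEq : c * R ^ (N:ℝ) / (C₁ * R ^ σ) ^ α = c * C₁ ^ (-α) * R ^ ((N:ℝ) - σ*α) := by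
      rw [Real.mul_rpow hC₁.le (Real.rpow_nonneg hR0.le σ), ← Real.rpow_mul hR0.le,
        Real.rpow_sub hR0, Real.rpow_neg hC₁.le]
      ring
    rw [hEq, Real.mul_rpow (by positivity) (by positivity),
      Real.mul_rpow hc.le (by positivity), ← Real.rpow_mul hR0.le,
      ← Real.rpow_mul hC₁.le]
    have hexp1 : -α * (1/e) = -(α/e) := by ring
    have hexp2 : ((N:ℝ) - σ*α) * (1/e) =
        ((N : ℝ) * (p + m - 1 - q) - σ * (m - 1 - q)) / (p - m + 1 + q) := by
      have hne : (p - m + 1 + q) ≠ 0 := by linarith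
      have he2 : e = (p - m + 1 + q) / s := by rw [he_def, hβ_def, hα_def]; ring
      rw [hα_def, he2, one_div_div, eq_div_iff hne, mul_assoc,
        div_mul_cancel₀ _ hne, sub_mul, hs_def]
      field_simp [ne_of_gt (show (0:ℝ) < p + m - 1 - q by linarith)]
    rw [hexp1, hexp2]
  exact ENNReal.ofReal_le_of_le_toReal hfin
end
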